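/- arXiv:1409.4685 — 2 statements merged into one kernel-verified Lean document; each statement's English description precedes it below -/
import Mathlib

section
/- Let T > 0, d ∈ ℕ, and let (μ_n)_{n≥1} and μ be Borel probability measures on the space C([0,T], ℝ^d) of continuous paths equipped with the supremum metric. If μ_n converges weakly to μ as n → ∞, then for every bounded continuous φ : ℝ^d → ℝ one has sup_{t∈[0,T]} | ∫ φ(ω(t)) dμ_n(ω) − ∫ φ(ω(t)) dμ(ω) | → 0 as n → ∞. -/
/-!
The functions `gₙ t = ∫ φ (ω t) dμₙ` converge pointwise to `g t = ∫ φ (ω t) dν`, and for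
`dist s t ≤ δ` we have `|gₙ s - gₙ t| ≤ ∫ w_δ(φ ∘ ω) dμₙ`, where `w_δ` is the modulus of
continuity. Since `ω ↦ w_δ(φ ∘ ω)` is bounded and continuous on path space, weak convergence
sends this bound to `∫ w_δ(φ ∘ ω) dν`, which is small for small `δ` by dominated convergence.
Hence `(gₙ)` is asymptotically equicontinuous on the compact `[0, T]`, which upgrades
pointwise to uniform convergence.
-/

open MeasureTheory Filter Topology BoundedContinuousFunction Metric Set

section ModulusOfContinuity

variable {K X : Type*} [PseudoMetricSpace K] [PseudoMetricSpace X]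

noncomputable def modulusOfContinuity (f : K → X) (δ : ℝ) : ℝ :=
  sSup ((fun p : K × K => dist (f p.1) (f p.2)) '' {p | dist p.1 p.2 ≤ δ})

lemma modulusOfContinuity_nonneg (f : K → X) (δ : ℝ) : 0 ≤ modulusOfContinuity f δ :=
  Real.sSup_nonneg (by rintro _ ⟨p, -, rfl⟩; exact dist_nonneg)

lemma modulusOfContinuity_le {f : K → X} {δ C : ℝ} (hC : 0 ≤ C)
    (h : ∀ s t, dist s t ≤ δ → dist (f s) (f t) ≤ C) : modulusOfContinuity f δ ≤ C :=
  Real.sSup_le (by rintro _ ⟨p, hp, rfl⟩; exact h p.1 p.2 hp) hC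

lemma norm_modulusOfContinuity_comp_le {E : Type*} [TopologicalSpace E] (φ : E →ᵇ ℝ)
    (ω : K → E) (δ : ℝ) :
    ‖modulusOfContinuity (φ ∘ ω) δ‖ ≤ 2 * ‖φ‖ := by
  rw [Real.norm_of_nonneg (modulusOfContinuity_nonneg _ _)]
  exact modulusOfContinuity_le (by positivity) fun s t _ => φ.dist_le_two_norm _ _

variable [CompactSpace K]

lemma isCompact_setOf_dist_le (δ : ℝ) : IsCompact {p : K × K | dist p.1 p.2 ≤ δ} :=
  (isClosed_le continuous_dist continuous_const).isCompact

lemma dist_le_modulusOfContinuity {f : K → X} (hf : Continuous f) {δ : ℝ} {s t : K}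
    (h : dist s t ≤ δ) : dist (f s) (f t) ≤ modulusOfContinuity f δ :=
  le_csSup ((isCompact_setOf_dist_le δ).bddAbove_image (by fun_prop)) ⟨(s, t), h, rfl⟩

lemma tendsto_modulusOfContinuity {f : K → X} (hf : Continuous f) :
    Tendsto (modulusOfContinuity f) (𝓝[>] 0) (𝓝 0) := by
  rw [Metric.tendsto_nhds]
  intro ε hε
  obtain ⟨δ₀, hδ₀, hfδ₀⟩ := Metric.uniformContinuous_iff.1
    (CompactSpace.uniformContinuous_of_continuous hf) (ε / 2) (half_pos hε)
  filter_upwards [Ioo_mem_nhdsGT hδ₀] with δ hδ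
  rw [Real.dist_0_eq_abs, abs_of_nonneg (modulusOfContinuity_nonneg f δ)]
  exact (modulusOfContinuity_le (half_pos hε).le fun s t hst =>
    (hfδ₀ (hst.trans_lt hδ.2)).le).trans_lt (half_lt_self hε)

end ModulusOfContinuity

section

variable {ι K X : Type*} [PseudoMetricSpace K] [PseudoMetricSpace X]

def AsymptoticallyUniformEquicontinuous (F : ι → K → X) (l : Filter ι) : Prop :=
  ∀ ε > 0, ∃ δ > 0, ∀ᶠ n in l, ∀ s t, dist s t < δ → dist (F n s) (F n t) < ε

theorem AsymptoticallyUniformEquicontinuous.tendstoUniformly [CompactSpace K] {F : ι → K → X}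
    {f : K → X} {l : Filter ι} [l.NeBot] (hF : AsymptoticallyUniformEquicontinuous F l)
    (hlim : ∀ t, Tendsto (F · t) l (𝓝 (f t))) : TendstoUniformly F f l := by
  rw [Metric.tendstoUniformly_iff]
  intro ε hε
  obtain ⟨δ, hδ, hFδ⟩ := hF (ε / 3) (by positivity)
  obtain ⟨net, -, hnet, hcover⟩ := finite_cover_balls_of_compact (isCompact_univ (X := K)) hδ
  have hf : ∀ s t, dist s t < δ → dist (f s) (f t) ≤ ε / 3 := fun s t hst =>
    le_of_tendsto ((hlim s).dist (hlim t)) (hFδ.mono fun n hn => (hn s t hst).le)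
  filter_upwards [hFδ, hnet.eventually_all.2 fun i _ =>
    Metric.tendsto_nhds.1 (hlim i) (ε / 3) (by positivity)] with n hFn hnetn t
  obtain ⟨i, hi, hti⟩ := mem_iUnion₂.1 (hcover (mem_univ t))
  calc dist (f t) (F n t) ≤ dist (f t) (f i) + dist (f i) (F n i) + dist (F n i) (F n t) :=
        dist_triangle4 _ _ _ _
    _ < ε / 3 + ε / 3 + ε / 3 :=
        add_lt_add (add_lt_add_of_le_of_lt (hf t i (mem_ball.1 hti))
          (dist_comm (f i) _ ▸ hnetn i hi)) (hFn i t (mem_ball'.1 hti))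
    _ = ε := by ring

theorem TendstoUniformly.tendsto_iSup_dist {α : Type*} {F : ι → α → X} {f : α → X}
    {l : Filter ι} (h : TendstoUniformly F f l) :
    Tendsto (fun n => ⨆ t, dist (F n t) (f t)) l (𝓝 0) := by
  rw [Metric.tendsto_nhds]
  intro ε hε
  filter_upwards [Metric.tendstoUniformly_iff.1 h (ε / 2) (half_pos hε)] with n hn
  rw [Real.dist_0_eq_abs, abs_of_nonneg (Real.iSup_nonneg fun _ => dist_nonneg)]
  exact (Real.iSup_le (fun t => (dist_comm (F n t) _ ▸ hn t).le) (half_pos hε).le).trans_lt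
    (half_lt_self hε)

end

noncomputable def BoundedContinuousFunction.compEval {K E : Type*} [TopologicalSpace K]
    [TopologicalSpace E] (φ : E →ᵇ ℝ) (t : K) : C(K, E) →ᵇ ℝ :=
  φ.compContinuous ⟨fun ω => ω t, continuous_eval_const t⟩

section

variable {K E : Type*} [PseudoMetricSpace K] [CompactSpace K] [TopologicalSpace E]

lemma continuous_modulusOfContinuity_comp {X : Type*} [PseudoMetricSpace X] {φ : E → X}
    (hφ : Continuous φ) (δ : ℝ) :
    Continuous fun ω : C(K, E) => modulusOfContinuity (φ ∘ ω) δ :=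
  (isCompact_setOf_dist_le δ).continuous_sSup (by fun_prop)

noncomputable def modulusOfContinuityBCF (φ : E →ᵇ ℝ) (δ : ℝ) : C(K, E) →ᵇ ℝ :=
  .ofNormedAddCommGroup (fun ω => modulusOfContinuity (φ ∘ ω) δ)
    (continuous_modulusOfContinuity_comp φ.continuous δ) (2 * ‖φ‖)
    fun ω => norm_modulusOfContinuity_comp_le φ ω δ

variable [MeasurableSpace C(K, E)] [OpensMeasurableSpace C(K, E)]

lemma tendsto_integral_modulusOfContinuity (φ : E →ᵇ ℝ) (ν : Measure C(K, E))
    [IsFiniteMeasure ν] :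
    Tendsto (fun δ => ∫ ω, modulusOfContinuity (φ ∘ ω) δ ∂ν) (𝓝[>] 0) (𝓝 0) := by
  simpa only [integral_zero] using tendsto_integral_filter_of_dominated_convergence
    (F := fun δ (ω : C(K, E)) => modulusOfContinuity (φ ∘ ω) δ) (fun _ => 2 * ‖φ‖)
    (.of_forall fun δ =>
      (continuous_modulusOfContinuity_comp φ.continuous δ).aestronglyMeasurable)
    (.of_forall fun δ => ae_of_all _ fun ω => norm_modulusOfContinuity_comp_le φ ω δ)
    (integrable_const _)
    (ae_of_all _ fun ω => tendsto_modulusOfContinuity (φ.continuous.comp ω.continuous))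

lemma dist_integral_comp_eval_le (φ : E →ᵇ ℝ) (ρ : Measure C(K, E)) [IsFiniteMeasure ρ]
    {δ : ℝ} {s t : K} (h : dist s t ≤ δ) :
    dist (∫ ω, φ (ω s) ∂ρ) (∫ ω, φ (ω t) ∂ρ) ≤ ∫ ω, modulusOfContinuity (φ ∘ ω) δ ∂ρ := by
  have hint : ∀ u : K, Integrable (fun ω : C(K, E) => φ (ω u)) ρ := fun u =>
    (φ.compEval u).integrable ρ
  calc dist (∫ ω, φ (ω s) ∂ρ) (∫ ω, φ (ω t) ∂ρ) = ‖∫ ω, (φ (ω s) - φ (ω t)) ∂ρ‖ := by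
        rw [dist_eq_norm, integral_sub (hint s) (hint t)]
    _ ≤ ∫ ω, ‖φ (ω s) - φ (ω t)‖ ∂ρ := norm_integral_le_integral_norm _
    _ ≤ ∫ ω, modulusOfContinuity (φ ∘ ω) δ ∂ρ :=
        integral_mono_of_nonneg (ae_of_all _ fun _ => norm_nonneg _)
          ((modulusOfContinuityBCF φ δ).integrable ρ) (ae_of_all _ fun ω => by
            simpa only [dist_eq_norm, Function.comp_apply] using
              dist_le_modulusOfContinuity (φ.continuous.comp ω.continuous) h)

theorem asymptoticallyUniformEquicontinuous_integral_comp_eval {ι : Type*} {l : Filter ι}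
    {μ : ι → Measure C(K, E)} {ν : Measure C(K, E)} [∀ n, IsFiniteMeasure (μ n)]
    [IsFiniteMeasure ν]
    (hweak : ∀ F : C(K, E) →ᵇ ℝ, Tendsto (fun n => ∫ ω, F ω ∂(μ n)) l (𝓝 (∫ ω, F ω ∂ν)))
    (φ : E →ᵇ ℝ) :
    AsymptoticallyUniformEquicontinuous (fun n t => ∫ ω, φ (ω t) ∂(μ n)) l := by
  intro ε hε
  obtain ⟨δ, hνδ, hδ⟩ := (((tendsto_integral_modulusOfContinuity φ ν).eventually
    (gt_mem_nhds hε)).and self_mem_nhdsWithin).exists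
  refine ⟨δ, hδ, ?_⟩
  filter_upwards [(hweak (modulusOfContinuityBCF φ δ)).eventually (gt_mem_nhds hνδ)]
    with n hn s t hst
  exact (dist_integral_comp_eval_le φ (μ n) hst.le).trans_lt hn

end

theorem weak_convergence_implies_weak_perturbation_general (T : ℝ) (d : ℕ)
    [MeasurableSpace C(Set.Icc (0:ℝ) T, EuclideanSpace ℝ (Fin d))]
    [BorelSpace C(Set.Icc (0:ℝ) T, EuclideanSpace ℝ (Fin d))]
    (μ : ℕ → Measure C(Set.Icc (0:ℝ) T, EuclideanSpace ℝ (Fin d)))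
    (ν : Measure C(Set.Icc (0:ℝ) T, EuclideanSpace ℝ (Fin d)))
    [∀ n, IsProbabilityMeasure (μ n)] [IsProbabilityMeasure ν]
    (hweak : ∀ F : C(Set.Icc (0:ℝ) T, EuclideanSpace ℝ (Fin d)) →ᵇ ℝ,
      Tendsto (fun n => ∫ ω, F ω ∂(μ n)) atTop (𝓝 (∫ ω, F ω ∂ν)))
    (φ : EuclideanSpace ℝ (Fin d) →ᵇ ℝ) :
    Tendsto (fun n => ⨆ t : Set.Icc (0:ℝ) T,
        |(∫ ω, φ (ω t) ∂(μ n)) - ∫ ω, φ (ω t) ∂ν|) atTop (𝓝 0) := by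
  have hpointwise : ∀ t, Tendsto (fun n => ∫ ω, φ (ω t) ∂(μ n)) atTop (𝓝 (∫ ω, φ (ω t) ∂ν)) :=
    fun t => hweak (φ.compEval t)
  simpa only [Real.dist_eq] using
    ((asymptoticallyUniformEquicontinuous_integral_comp_eval hweak φ).tendstoUniformly
      hpointwise).tendsto_iSup_dist

/-- If Borel probability measures `μ n` on `C([0,T], ℝ^d)` (with the sup metric)
converge weakly to `ν`, then for every bounded continuous `φ : ℝ^d → ℝ`,
`sup_{t ∈ [0,T]} |∫ φ(ω(t)) dμ_n(ω) − ∫ φ(ω(t)) dν(ω)| → 0`. -/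
theorem weak_convergence_implies_weak_perturbation (T : ℝ) (hT : 0 < T) (d : ℕ)
    [MeasurableSpace C(Set.Icc (0:ℝ) T, EuclideanSpace ℝ (Fin d))]
    [BorelSpace C(Set.Icc (0:ℝ) T, EuclideanSpace ℝ (Fin d))]
    (μ : ℕ → Measure C(Set.Icc (0:ℝ) T, EuclideanSpace ℝ (Fin d)))
    (ν : Measure C(Set.Icc (0:ℝ) T, EuclideanSpace ℝ (Fin d)))
    [∀ n, IsProbabilityMeasure (μ n)] [IsProbabilityMeasure ν]
    (hweak : ∀ F : C(Set.Icc (0:ℝ) T, EuclideanSpace ℝ (Fin d)) →ᵇ ℝ,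
      Tendsto (fun n => ∫ ω, F ω ∂(μ n)) atTop (𝓝 (∫ ω, F ω ∂ν)))
    (φ : EuclideanSpace ℝ (Fin d) →ᵇ ℝ) :
    Tendsto (fun n => ⨆ t : Set.Icc (0:ℝ) T,
        |(∫ ω, φ (ω t) ∂(μ n)) - ∫ ω, φ (ω t) ∂ν|) atTop (𝓝 0) :=
  weak_convergence_implies_weak_perturbation_general T d μ ν hweak φ
end

section
/- Let m, n ∈ ℕ, let A be a real m×n matrix with rank(A) = n, let b ∈ ℝ^m, and let θ̂ be the unique global minimizer of x ↦ ‖Ax − b‖₂. Let (A_k)_{k≥1} be m×n matrices with A_k → A entrywise and (b_k)_{k≥1} ⊂ ℝ^m with b_k → b. If for each k, x_k ∈ ℝ^n is any global minimizer of x ↦ ‖A_k x − b_k‖₂, then x_k → θ̂ as k → ∞. -/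
/-!
A least squares solution `x` of `A x ≈ b` satisfies the normal equations `AᵀA x = Aᵀ b`: the
residual `A x - b` is orthogonal to the range of `A`. When `A` has full column rank the Gram
matrix `AᵀA` is invertible, so `x = (AᵀA)⁻¹Aᵀ b`. Invertibility is an open condition and matrix
inversion is continuous on invertible matrices, so eventually `x_k = (A_kᵀA_k)⁻¹A_kᵀ b_k`, which
converges to `(AᵀA)⁻¹Aᵀ b = θ̂`.
-/

open Filter Topology Matrix WithLp

section LeastSquares

variable {E F : Type*} [NormedAddCommGroup E] [InnerProductSpace ℝ E] [FiniteDimensional ℝ E]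
  [NormedAddCommGroup F] [InnerProductSpace ℝ F] [FiniteDimensional ℝ F]

theorem LinearMap.adjoint_apply_sub_eq_zero_of_forall_norm_sub_le {T : E →ₗ[ℝ] F} {x : E}
    {b : F} (h : ∀ y, ‖T x - b‖ ≤ ‖T y - b‖) : LinearMap.adjoint T (T x - b) = 0 := by
  have hmin : ‖b - T x‖ = ⨅ w : (LinearMap.range T : Set F), ‖b - w‖ := by
    refine le_antisymm (le_ciInf ?_) (ciInf_le (f := fun w : (LinearMap.range T : Set F) =>
      ‖b - w‖) ⟨0, ?_⟩ ⟨T x, LinearMap.mem_range_self T x⟩)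
    · rintro ⟨_, y, rfl⟩
      simpa only [norm_sub_rev b] using h y
    · rintro _ ⟨w, rfl⟩
      exact norm_nonneg _
  have horth := (Submodule.norm_eq_iInf_iff_real_inner_eq_zero _
    (LinearMap.mem_range_self T x)).mp hmin
  rw [← inner_self_eq_zero (𝕜 := ℝ), LinearMap.adjoint_inner_left, ← neg_sub b, inner_neg_left,
    horth _ (LinearMap.mem_range_self T _), neg_zero]

end LeastSquares

namespace Matrix

theorem isUnit_of_rank_eq_card {ι K : Type*} [Fintype ι] [DecidableEq ι] [Field K]
    {M : Matrix ι ι K} (h : M.rank = Fintype.card ι) : IsUnit M := by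
  rw [← mulVec_surjective_iff_isUnit, ← coe_mulVecLin, ← LinearMap.range_eq_top]
  apply Submodule.eq_top_of_finrank_eq
  rw [← rank, h, Module.finrank_fintype_fun_eq_card]

variable {m n : Type*} [Fintype m] [Fintype n] [DecidableEq n]

theorem transpose_mul_self_mulVec_eq_of_forall_norm_sub_le [DecidableEq m] {A : Matrix m n ℝ}
    {x : EuclideanSpace ℝ n} {b : EuclideanSpace ℝ m}
    (h : ∀ y, ‖toEuclideanLin A x - b‖ ≤ ‖toEuclideanLin A y - b‖) :
    (Aᵀ * A) *ᵥ ofLp x = Aᵀ *ᵥ ofLp b := by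
  have := congrArg ofLp (LinearMap.adjoint_apply_sub_eq_zero_of_forall_norm_sub_le h)
  rw [← toEuclideanLin_conjTranspose_eq_adjoint, conjTranspose_eq_transpose_of_trivial] at this
  simpa [ofLp_toLpLin, mulVec_sub, mulVec_mulVec, sub_eq_zero] using this

theorem ofLp_eq_mulVec_of_forall_norm_sub_le [DecidableEq m] {A : Matrix m n ℝ}
    (hA : IsUnit (Aᵀ * A).det) {x : EuclideanSpace ℝ n} {b : EuclideanSpace ℝ m}
    (h : ∀ y, ‖toEuclideanLin A x - b‖ ≤ ‖toEuclideanLin A y - b‖) :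
    ofLp x = ((Aᵀ * A)⁻¹ * Aᵀ) *ᵥ ofLp b := by
  rw [← mulVec_mulVec, ← transpose_mul_self_mulVec_eq_of_forall_norm_sub_le h, mulVec_mulVec,
    nonsing_inv_mul _ hA, one_mulVec]

theorem continuousAt_transpose_mul_self_inv_mul_transpose {A : Matrix m n ℝ}
    (hA : IsUnit (Aᵀ * A).det) : ContinuousAt (fun M : Matrix m n ℝ => (Mᵀ * M)⁻¹ * Mᵀ) A := by
  have hinv : ContinuousAt Ring.inverse (Aᵀ * A).det :=
    hA.unit_spec ▸ NormedRing.inverse_continuousAt hA.unit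
  have hgram : Continuous fun M : Matrix m n ℝ => Mᵀ * M :=
    continuous_id.matrix_transpose.matrix_mul continuous_id
  have hinv_gram : ContinuousAt (fun M : Matrix m n ℝ => (Mᵀ * M)⁻¹) A :=
    (continuousAt_matrix_inv _ hinv).comp (f := fun M : Matrix m n ℝ => Mᵀ * M) hgram.continuousAt
  exact (continuous_fst.matrix_mul continuous_snd).continuousAt.comp
    (f := fun M : Matrix m n ℝ => ((Mᵀ * M)⁻¹, Mᵀ))
    (hinv_gram.prodMk continuous_id.matrix_transpose.continuousAt)

end Matrix

/-- If `A` has full column rank `n`, `θ̂` is the (unique) global minimizer of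
`x ↦ ‖Ax − b‖₂`, `A_k → A` entrywise, `b_k → b`, and each `x_k` is a global minimizer of
`x ↦ ‖A_k x − b_k‖₂`, then `x_k → θ̂`. -/
theorem least_squares_solution_continuous (m n : ℕ)
    (A : Matrix (Fin m) (Fin n) ℝ) (hA : A.rank = n)
    (b : EuclideanSpace ℝ (Fin m)) (θhat : EuclideanSpace ℝ (Fin n))
    (hθhat : ∀ y, ‖Matrix.toEuclideanLin A θhat - b‖ ≤ ‖Matrix.toEuclideanLin A y - b‖)
    (Ak : ℕ → Matrix (Fin m) (Fin n) ℝ)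
    (hAk : ∀ i j, Tendsto (fun k => Ak k i j) atTop (𝓝 (A i j)))
    (bk : ℕ → EuclideanSpace ℝ (Fin m)) (hbk : Tendsto bk atTop (𝓝 b))
    (xk : ℕ → EuclideanSpace ℝ (Fin n))
    (hxk : ∀ k y, ‖Matrix.toEuclideanLin (Ak k) (xk k) - bk k‖ ≤
      ‖Matrix.toEuclideanLin (Ak k) y - bk k‖) :
    Tendsto xk atTop (𝓝 θhat) := by
  have hAk_lim : Tendsto Ak atTop (𝓝 A) := tendsto_pi_nhds.2 fun i => tendsto_pi_nhds.2 (hAk i)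
  have hunit : IsUnit (Aᵀ * A).det := (isUnit_iff_isUnit_det _).mp <|
    isUnit_of_rank_eq_card (by rw [rank_transpose_mul_self, hA, Fintype.card_fin])
  have hunit_k : ∀ᶠ k in atTop, IsUnit ((Ak k)ᵀ * Ak k).det :=
    ((continuous_id.matrix_transpose.matrix_mul continuous_id).matrix_det.tendsto A |>.comp
      hAk_lim).eventually (Units.isOpen.mem_nhds hunit)
  have hsol : ∀ᶠ k in atTop, ofLp (xk k) = (((Ak k)ᵀ * Ak k)⁻¹ * (Ak k)ᵀ) *ᵥ ofLp (bk k) :=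
    hunit_k.mono fun k hk => ofLp_eq_mulVec_of_forall_norm_sub_le hk (hxk k)
  rw [(PiLp.homeomorph 2 _).isInducing.tendsto_nhds_iff]
  change Tendsto (fun k => ofLp (xk k)) atTop (𝓝 (ofLp θhat))
  rw [ofLp_eq_mulVec_of_forall_norm_sub_le hunit hθhat]
  refine Tendsto.congr' (hsol.mono fun k hk => hk.symm) ?_
  exact (continuous_fst.matrix_mulVec continuous_snd).tendsto _ |>.comp <|
    ((continuousAt_transpose_mul_self_inv_mul_transpose hunit).tendsto.comp hAk_lim).prodMk_nhds
      ((PiLp.continuous_ofLp 2 _).tendsto b |>.comp hbk)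
end
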